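/- The series ∑_{x=2}^∞ [ ((ln x)³ − (ln(x−1))³) − (3·(ln x)² / x − 3·ln x / x² + 1/x³) ] converges (its sum is denoted γ₃′ ≈ 2.6396589…). -/

import Mathlib

/-!
With `L = log (x + 1)` and `M = log x`, the summand at `x + 1` is exactly `(L - 1/(x+1))³ - M³`.
Since `1/(x+1) ≤ L - M ≤ 1/x`, the two cubed quantities are ordered and differ by at most
`1/x - 1/(x+1) = O(1/x²)`, so the summand is `O((log x)² / x²)`, which is summable.
-/

open Real Filter Asymptotics

namespace Real

lemma inv_add_one_le_log_add_one_sub_log {x : ℝ} (hx : 0 < x) :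
    (x + 1)⁻¹ ≤ log (x + 1) - log x := by
  rw [← log_div (by positivity) hx.ne']
  calc (x + 1)⁻¹ = 1 - ((x + 1) / x)⁻¹ := by field_simp; ring
    _ ≤ log ((x + 1) / x) := one_sub_inv_le_log_of_pos (by positivity)

lemma log_add_one_sub_log_le_inv {x : ℝ} (hx : 0 < x) :
    log (x + 1) - log x ≤ x⁻¹ := by
  rw [← log_div (by positivity) hx.ne']
  calc log ((x + 1) / x) ≤ (x + 1) / x - 1 := log_le_sub_one_of_pos (by positivity)
    _ = x⁻¹ := by field_simp; ring

lemma isBigO_log_pow_div_rpow (k : ℕ) {p q : ℝ} (hqp : q < p) :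
    (fun x : ℝ => log x ^ k / x ^ p) =O[atTop] fun x => x ^ (-q) := by
  have hlog : (fun x : ℝ => log x ^ k) =O[atTop] fun x => x ^ (p - q) := by
    simpa only [rpow_natCast] using
      (isLittleO_log_rpow_rpow_atTop (k : ℝ) (sub_pos.mpr hqp)).isBigO
  refine (hlog.mul (isBigO_refl (fun x : ℝ => (x ^ p)⁻¹) atTop)).congr' ?_ ?_
  · exact .of_eq (by simp [div_eq_mul_inv])
  · filter_upwards [eventually_gt_atTop 0] with x hx
    rw [rpow_sub hx, rpow_neg hx.le]
    field_simp

lemma summable_log_pow_div_rpow (k : ℕ) {p : ℝ} (hp : 1 < p) :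
    Summable fun n : ℕ => log n ^ k / (n : ℝ) ^ p :=
  summable_of_isBigO_nat' (summable_nat_rpow.mpr (by linarith : -((p + 1) / 2) < -1))
    ((isBigO_log_pow_div_rpow k (by linarith : (p + 1) / 2 < p)).comp_tendsto
      tendsto_natCast_atTop_atTop)

end Real

lemma pow_three_sub_pow_three_le {α : Type*} [CommRing α] [LinearOrder α] [IsStrictOrderedRing α]
    {a b : α} (hb : 0 ≤ b) (hba : b ≤ a) : a ^ 3 - b ^ 3 ≤ 3 * a ^ 2 * (a - b) := by
  nlinarith [mul_nonneg (sub_nonneg.mpr hba) (mul_nonneg hb (sub_nonneg.mpr hba)),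
    mul_nonneg (sub_nonneg.mpr hba) (mul_nonneg (sub_nonneg.mpr hba) (hb.trans hba))]

lemma inv_sub_inv_add_one_le_two_div_sq {x : ℝ} (hx : 1 ≤ x) :
    x⁻¹ - (x + 1)⁻¹ ≤ 2 / (x + 1) ^ 2 := by
  have hx0 : 0 < x := by linarith
  rw [inv_sub_inv hx0.ne' (by positivity), div_le_div_iff₀ (by positivity) (by positivity)]
  nlinarith

lemma abs_log_cube_backward_diff_sub_approx_le {x : ℝ} (hx : 1 ≤ x) :
    |(log (x + 1) ^ 3 - log x ^ 3) -
        (3 * log (x + 1) ^ 2 / (x + 1) - 3 * log (x + 1) / (x + 1) ^ 2 + 1 / (x + 1) ^ 3)|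
      ≤ 6 * (log (x + 1) ^ 2 / (x + 1) ^ 2) := by
  have hx0 : 0 < x := by linarith
  set L := log (x + 1)
  set M := log x
  have hM : 0 ≤ M := log_nonneg hx
  have hlow : (x + 1)⁻¹ ≤ L - M := inv_add_one_le_log_add_one_sub_log hx0
  have hup : L - M ≤ x⁻¹ := log_add_one_sub_log_le_inv hx0
  have hMle : M ≤ L - (x + 1)⁻¹ := by linarith
  have hcube : (L ^ 3 - M ^ 3) - (3 * L ^ 2 / (x + 1) - 3 * L / (x + 1) ^ 2 + 1 / (x + 1) ^ 3)
      = (L - (x + 1)⁻¹) ^ 3 - M ^ 3 := by field_simp; ring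
  rw [hcube, abs_of_nonneg (sub_nonneg.mpr (pow_le_pow_left₀ hM hMle 3))]
  calc (L - (x + 1)⁻¹) ^ 3 - M ^ 3 ≤ 3 * (L - (x + 1)⁻¹) ^ 2 * (L - (x + 1)⁻¹ - M) :=
        pow_three_sub_pow_three_le hM hMle
    _ ≤ 3 * L ^ 2 * (x⁻¹ - (x + 1)⁻¹) := by
        have hsq : (L - (x + 1)⁻¹) ^ 2 ≤ L ^ 2 :=
          pow_le_pow_left₀ (hM.trans hMle) (by simp only [sub_le_self_iff]; positivity) 2
        exact mul_le_mul (by linarith) (by linarith) (by linarith) (by positivity)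
    _ ≤ 3 * L ^ 2 * (2 / (x + 1) ^ 2) := by gcongr; exact inv_sub_inv_add_one_le_two_div_sq hx
    _ = 6 * (L ^ 2 / (x + 1) ^ 2) := by ring

/-- The series ∑_{x=2}^∞ [((ln x)³ − (ln(x−1))³) − (3 (ln x)²/x − 3 ln x / x² + 1/x³)]
converges; its sum is γ₃′. -/
theorem summable_gamma_three_prime :
    Summable (fun x : ℕ =>
      ((Real.log ((x : ℝ) + 2)) ^ 3 - (Real.log ((x : ℝ) + 1)) ^ 3) -
        (3 * (Real.log ((x : ℝ) + 2)) ^ 2 / ((x : ℝ) + 2) -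
          3 * Real.log ((x : ℝ) + 2) / ((x : ℝ) + 2) ^ 2 + 1 / ((x : ℝ) + 2) ^ 3)) := by
  have hmajorant : Summable fun n : ℕ => 6 * (log ((n : ℝ) + 2) ^ 2 / ((n : ℝ) + 2) ^ 2) := by
    have h := (summable_nat_add_iff 2).mpr (summable_log_pow_div_rpow 2 one_lt_two)
    simpa only [Nat.cast_add, Nat.cast_ofNat, rpow_two] using h.mul_left 6
  refine Summable.of_norm_bounded hmajorant fun n => ?_
  have h := abs_log_cube_backward_diff_sub_approx_le (x := (n : ℝ) + 1) (by simp)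
  rwa [show (n : ℝ) + 1 + 1 = n + 2 by ring] at h
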